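/- The function ξ : ℝ → ℝ defined by ξ(t) = 2 / ( cosh(t/2)·(π − 4·arctan(tanh(t/4))) ) satisfies, for all t ∈ ℝ, the differential equation 2·ξ'(t) = ξ(t)·( ξ(t) − tanh(t/2) ), together with the boundary conditions lim_{t→−∞} ξ(t) = 0 and lim_{t→+∞} ξ(t) = 1. (Note tanh(t/2) = sinh t/(cosh t + 1), so this is the κ = 0 scaling equation (2/ξ)·dξ/dt = ξ − sinh t/(cosh t + cosh κ).) -/

import Mathlib

/-!
Put θ(t) = π − 4·arctan(tanh(t/4)), so that ξ = 2 / (cosh(t/2)·θ). Since 2·arctan(tanh(x/2)) is the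
Gudermannian function, θ' = −sech(t/2) and sin(θ/2) = sech(t/2). The first fact gives the
differential equation by the quotient rule; the second gives ξ = sinc(θ/2), and as θ runs from 2π
(at −∞) down to 0 (at +∞) the boundary values are sinc π = 0 and sinc 0 = 1.
-/

noncomputable section

/-- The κ = 0 scaling profile `ξ(t)`. -/
def ξfun (t : ℝ) : ℝ :=
  2 / (Real.cosh (t/2) * (Real.pi - 4 * Real.arctan (Real.tanh (t/4))))

open Real Filter Topology

namespace Real

lemma hasDerivAt_tanh (x : ℝ) : HasDerivAt tanh (cosh x ^ 2)⁻¹ x := by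
  have h := (hasDerivAt_sinh x).div (hasDerivAt_cosh x) (cosh_pos x).ne'
  rw [show sinh / cosh = tanh from funext fun y => (tanh_eq_sinh_div_cosh y).symm] at h
  refine h.congr_deriv ?_
  rw [← sq, ← sq, cosh_sq_sub_sinh_sq, one_div]

lemma one_sub_tanh (x : ℝ) : 1 - tanh x = exp (-x) / cosh x := by
  rw [tanh_eq_sinh_div_cosh, ← cosh_sub_sinh]
  field_simp

lemma tendsto_cosh_atTop : Tendsto cosh atTop atTop :=
  tendsto_atTop_mono (fun x => by rw [cosh_eq]; linarith [exp_pos (-x)])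
    (tendsto_exp_atTop.atTop_div_const two_pos)

lemma tendsto_tanh_atTop : Tendsto tanh atTop (𝓝 1) := by
  have h : Tendsto (fun x => 1 - exp (-x) / cosh x) atTop (𝓝 (1 - 0)) :=
    tendsto_const_nhds.sub (tendsto_exp_neg_atTop_nhds_zero.div_atTop tendsto_cosh_atTop)
  rw [sub_zero] at h
  exact h.congr fun x => by linarith [one_sub_tanh x]

lemma tendsto_tanh_atBot : Tendsto tanh atBot (𝓝 (-1)) := by
  have h := (tendsto_tanh_atTop.comp tendsto_neg_atBot_atTop).neg
  simpa [Function.comp_def] using h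

lemma hasDerivAt_arctan_tanh (x : ℝ) :
    HasDerivAt (fun y => arctan (tanh y)) (cosh (2 * x))⁻¹ x := by
  refine ((hasDerivAt_arctan' (tanh x)).comp x (hasDerivAt_tanh x)).congr_deriv ?_
  rw [tanh_eq_sinh_div_cosh, cosh_two_mul]
  have := cosh_pos x
  field_simp

lemma cos_two_mul_arctan_tanh (x : ℝ) : cos (2 * arctan (tanh x)) = (cosh (2 * x))⁻¹ := by
  rw [cos_two_mul, cos_sq_arctan, tanh_eq_sinh_div_cosh, cosh_two_mul]
  have := cosh_pos x
  field_simp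
  linear_combination cosh_sq_sub_sinh_sq x

lemma arctan_tanh_lt_pi_div_four (x : ℝ) : arctan (tanh x) < π / 4 := by
  simpa using arctan_strictMono (tanh_lt_one x)

end Real

def θfun (t : ℝ) : ℝ := π - 4 * arctan (tanh (t / 4))

lemma θfun_pos (t : ℝ) : 0 < θfun t := by
  rw [θfun]
  linarith [arctan_tanh_lt_pi_div_four (t / 4)]

lemma hasDerivAt_θfun (t : ℝ) : HasDerivAt θfun (-(cosh (t / 2))⁻¹) t := by
  have h : HasDerivAt (fun s => arctan (tanh (s / 4))) ((cosh (t / 2))⁻¹ * (1 / 4)) t := by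
    have h := (hasDerivAt_arctan_tanh (t / 4)).comp t ((hasDerivAt_id' t).div_const 4)
    rwa [show 2 * (t / 4) = t / 2 by ring] at h
  exact ((h.const_mul 4).const_sub π).congr_deriv (by ring)

lemma sin_θfun_div_two (t : ℝ) : sin (θfun t / 2) = (cosh (t / 2))⁻¹ := by
  rw [θfun, show (π - 4 * arctan (tanh (t / 4))) / 2 = π / 2 - 2 * arctan (tanh (t / 4)) by ring,
    sin_pi_div_two_sub, cos_two_mul_arctan_tanh, show 2 * (t / 4) = t / 2 by ring]

lemma ξfun_eq_div_cosh_mul_θfun (t : ℝ) : ξfun t = 2 / (cosh (t / 2) * θfun t) := rfl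

lemma ξfun_eq_sinc (t : ℝ) : ξfun t = sinc (θfun t / 2) := by
  have := θfun_pos t
  have := cosh_pos (t / 2)
  rw [sinc_of_ne_zero (by positivity), sin_θfun_div_two, ξfun_eq_div_cosh_mul_θfun]
  field_simp

lemma tendsto_θfun {l : Filter ℝ} {a : ℝ} (h : Tendsto (fun t => tanh (t / 4)) l (𝓝 a)) :
    Tendsto θfun l (𝓝 (π - 4 * arctan a)) :=
  (((continuous_arctan.tendsto a).comp h).const_mul 4).const_sub π

lemma tendsto_θfun_atBot : Tendsto θfun atBot (𝓝 (2 * π)) := by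
  have h := tendsto_θfun (tendsto_tanh_atBot.comp (tendsto_id.atBot_div_const four_pos))
  rwa [arctan_neg, arctan_one, show π - 4 * -(π / 4) = 2 * π by ring] at h

lemma tendsto_θfun_atTop : Tendsto θfun atTop (𝓝 0) := by
  have h := tendsto_θfun (tendsto_tanh_atTop.comp (tendsto_id.atTop_div_const four_pos))
  rwa [arctan_one, show π - 4 * (π / 4) = 0 by ring] at h

lemma hasDerivAt_ξfun (t : ℝ) :
    HasDerivAt ξfun (ξfun t * (ξfun t - tanh (t / 2)) / 2) t := by
  have hc := cosh_pos (t / 2)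
  have hθ := θfun_pos t
  have h := (hasDerivAt_const t (2 : ℝ)).div
    (((hasDerivAt_id' t).div_const 2).cosh.mul (hasDerivAt_θfun t)) (mul_pos hc hθ).ne'
  refine h.congr_deriv ?_
  simp only [Pi.mul_apply, ξfun_eq_div_cosh_mul_θfun, tanh_eq_sinh_div_cosh]
  field_simp
  ring

/-- `ξ` solves `2ξ' = ξ(ξ − tanh(t/2))` with the boundary conditions
`ξ(−∞) = 0`, `ξ(+∞) = 1`. -/
theorem stmt14 :
    (∀ t : ℝ, HasDerivAt ξfun (ξfun t * (ξfun t - Real.tanh (t/2)) / 2) t)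
    ∧ Filter.Tendsto ξfun Filter.atBot (nhds 0)
    ∧ Filter.Tendsto ξfun Filter.atTop (nhds 1) := by
  have hξ : ξfun = sinc ∘ fun t => θfun t / 2 := funext ξfun_eq_sinc
  refine ⟨hasDerivAt_ξfun, ?_, ?_⟩
  · have h := (continuous_sinc.tendsto _).comp (tendsto_θfun_atBot.div_const 2)
    rwa [mul_div_cancel_left₀ π two_ne_zero, sinc_of_ne_zero pi_ne_zero, sin_pi, zero_div, ← hξ] at h
  · have h := (continuous_sinc.tendsto _).comp (tendsto_θfun_atTop.div_const 2)
    rwa [zero_div, sinc_zero, ← hξ] at h
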